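/- Let A ∈ ℝ^{m×m} be row and column diagonally dominant with |A_{ii}| ≥ 0.75 and |A_{ii}| ≥ 0.5 + Σ_{j≠i}|A_{ij}|, |A_{ii}| ≥ 0.5 + Σ_{j≠i}|A_{ji}|, and with at most s nonzero entries per row and per column. Let B ∈ ℝ^{m×m} have the same sparsity pattern as A (B_{ij} = 0 whenever A_{ij} = 0) with all entries bounded by ζ ≤ 1/(10s) in absolute value. Let b, y ∈ ℝ^m with ‖y‖_∞ ≤ ζ and ‖b‖_∞ ≤ C₀. Then A and A+B are invertible, and ‖(A+B)⁻¹(b+y) − A⁻¹b‖_∞ ≤ c·s·ζ for a constant c depending only on C₀. -/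

import Mathlib

/-!
Both `A` and `A + B` are row diagonally dominant with a uniform gap (`1/2`, and `2/5` once the
sparse perturbation, whose row sums are at most `s ζ ≤ 1/10`, is subtracted), and a gap `δ`
gives `δ ‖v‖ ≤ ‖M v‖` in the sup-norm. With `x = A⁻¹ b` and `x' = (A + B)⁻¹ (b + y)`, the
identity `A (x' - x) = y - B x'` then bounds `‖x' - x‖` by `2 (ζ + s ζ ‖x'‖)`, while
`‖x'‖ ≤ 5/2 (C₀ + ζ)`.
-/

open Finset

namespace Matrix

variable {l n : Type*} [Fintype l] [Fintype n]

theorem norm_mulVec_le_of_sum_abs_le (M : Matrix l n ℝ) {K : ℝ} (hK : ∀ i, ∑ j, |M i j| ≤ K)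
    (hK₀ : 0 ≤ K) (v : n → ℝ) : ‖M *ᵥ v‖ ≤ K * ‖v‖ := by
  rw [pi_norm_le_iff_of_nonneg (by positivity)]
  intro i
  calc ‖(M *ᵥ v) i‖ = |∑ j, M i j * v j| := rfl
    _ ≤ ∑ j, |M i j| * ‖v‖ := by
        refine (abs_sum_le_sum_abs _ _).trans (sum_le_sum fun j _ => ?_)
        rw [abs_mul]
        exact mul_le_mul_of_nonneg_left (norm_le_pi_norm v j) (abs_nonneg _)
    _ = (∑ j, |M i j|) * ‖v‖ := by rw [sum_mul]
    _ ≤ K * ‖v‖ := mul_le_mul_of_nonneg_right (hK i) (norm_nonneg v)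

variable [DecidableEq n]

def IsRowDiagDominant (M : Matrix n n ℝ) (δ : ℝ) : Prop :=
  ∀ i, δ + ∑ j ∈ univ.erase i, |M i j| ≤ |M i i|

namespace IsRowDiagDominant

variable {M N : Matrix n n ℝ} {δ : ℝ}

theorem mono (hM : M.IsRowDiagDominant δ) {δ' : ℝ} (h : δ' ≤ δ) : M.IsRowDiagDominant δ' :=
  fun i => by linarith [hM i]

theorem add (hM : M.IsRowDiagDominant δ) {ε : ℝ} (hN : ∀ i, ∑ j, |N i j| ≤ ε) :
    (M + N).IsRowDiagDominant (δ - ε) := by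
  intro i
  have hdiag : |M i i| - |N i i| ≤ |(M + N) i i| := by
    simpa using abs_sub_abs_le_abs_add (M i i) (N i i)
  have hoff : ∑ j ∈ univ.erase i, |(M + N) i j|
      ≤ ∑ j ∈ univ.erase i, |M i j| + ∑ j ∈ univ.erase i, |N i j| := by
    rw [← sum_add_distrib]
    exact sum_le_sum fun j _ => abs_add_le (M i j) (N i j)
  have hNi := add_sum_erase univ (fun j => |N i j|) (mem_univ i)
  linarith [hM i, hN i]

theorem isUnit (hM : M.IsRowDiagDominant δ) (hδ : 0 < δ) : IsUnit M :=
  (isUnit_iff_isUnit_det M).mpr <| isUnit_iff_ne_zero.mpr <|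
    det_ne_zero_of_sum_row_lt_diag fun k => by
      simpa only [Real.norm_eq_abs] using (lt_add_of_pos_left _ hδ).trans_le (hM k)

/-- The sup-norm of `v` is attained at a coordinate `i`, and row `i` of `M *ᵥ v` is dominated
by its diagonal term. -/
theorem mul_norm_le_norm_mulVec (hM : M.IsRowDiagDominant δ) (v : n → ℝ) :
    δ * ‖v‖ ≤ ‖M *ᵥ v‖ := by
  rcases isEmpty_or_nonempty n with _ | _
  · simp [Subsingleton.elim v 0]
  obtain ⟨i, -, hi⟩ := univ.exists_mem_eq_sup univ_nonempty fun j => ‖v j‖₊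
  have hvi : ‖v‖ = |v i| := by rw [Pi.norm_def, hi]; rfl
  have hvj : ∀ j, |v j| ≤ |v i| := fun j => hvi ▸ norm_le_pi_norm v j
  have hrow : (M *ᵥ v) i = M i i * v i + ∑ j ∈ univ.erase i, M i j * v j :=
    (add_sum_erase _ _ (mem_univ i)).symm
  have hoff : |∑ j ∈ univ.erase i, M i j * v j| ≤ (∑ j ∈ univ.erase i, |M i j|) * |v i| := by
    rw [sum_mul]
    refine (abs_sum_le_sum_abs _ _).trans (sum_le_sum fun j _ => ?_)
    rw [abs_mul]
    exact mul_le_mul_of_nonneg_left (hvj j) (abs_nonneg _)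
  calc δ * ‖v‖ ≤ |M i i| * |v i| - (∑ j ∈ univ.erase i, |M i j|) * |v i| := by
        rw [hvi, ← sub_mul]
        exact mul_le_mul_of_nonneg_right (by linarith [hM i]) (abs_nonneg _)
    _ ≤ |(M *ᵥ v) i| := by
        rw [hrow, ← abs_mul]
        linarith [abs_sub_abs_le_abs_add (M i i * v i) (∑ j ∈ univ.erase i, M i j * v j)]
    _ ≤ ‖M *ᵥ v‖ := norm_le_pi_norm (M *ᵥ v) i

/-- Apply the gap of `A` to the identity `A (x' - x) = y - B x'`. -/
theorem mul_norm_sub_le {A B : Matrix n n ℝ} (hA : A.IsRowDiagDominant δ) {β : ℝ}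
    (hB : ∀ i, ∑ j, |B i j| ≤ β) (hβ : 0 ≤ β) {x x' b y : n → ℝ} (hx : A *ᵥ x = b)
    (hx' : (A + B) *ᵥ x' = b + y) : δ * ‖x' - x‖ ≤ ‖y‖ + β * ‖x'‖ := by
  have hkey : A *ᵥ (x' - x) = y - B *ᵥ x' := by
    rw [add_mulVec] at hx'
    rw [mulVec_sub, hx]
    linear_combination hx'
  calc δ * ‖x' - x‖ ≤ ‖y - B *ᵥ x'‖ := hkey ▸ hA.mul_norm_le_norm_mulVec (x' - x)
    _ ≤ ‖y‖ + ‖B *ᵥ x'‖ := norm_sub_le _ _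
    _ ≤ ‖y‖ + β * ‖x'‖ := by gcongr; exact norm_mulVec_le_of_sum_abs_le B hB hβ x'

theorem mul_mul_norm_inv_mulVec_sub_le {A B : Matrix n n ℝ} (hA : A.IsRowDiagDominant δ)
    (hδ : 0 < δ) {δ' : ℝ} (hAB : (A + B).IsRowDiagDominant δ') (hδ' : 0 < δ') {β : ℝ}
    (hB : ∀ i, ∑ j, |B i j| ≤ β) (hβ : 0 ≤ β) (b y : n → ℝ) :
    δ * δ' * ‖(A + B)⁻¹ *ᵥ (b + y) - A⁻¹ *ᵥ b‖ ≤ δ' * ‖y‖ + β * ‖b + y‖ := by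
  have hsolve : ∀ {M : Matrix n n ℝ} (c : n → ℝ), IsUnit M → M *ᵥ (M⁻¹ *ᵥ c) = c :=
    fun c hM => by
      rw [mulVec_mulVec, mul_nonsing_inv _ ((isUnit_iff_isUnit_det _).mp hM), one_mulVec]
  have hdiff := hA.mul_norm_sub_le hB hβ (hsolve b (hA.isUnit hδ))
    (hsolve (b + y) (hAB.isUnit hδ'))
  have hx' := hAB.mul_norm_le_norm_mulVec ((A + B)⁻¹ *ᵥ (b + y))
  rw [hsolve (b + y) (hAB.isUnit hδ')] at hx'
  nlinarith [mul_le_mul_of_nonneg_left hx' hβ]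

end IsRowDiagDominant

end Matrix

theorem sum_abs_le_of_pattern {ι : Type*} [Fintype ι] {f g : ι → ℝ} {s : ℕ} {ζ : ℝ}
    (hfg : ∀ j, g j = 0 → f j = 0) (hg : #{j | g j ≠ 0} ≤ s) (hf : ∀ j, |f j| ≤ ζ)
    (hζ : 0 ≤ ζ) : ∑ j, |f j| ≤ s * ζ := by
  rw [← sum_filter_of_ne (p := fun j => g j ≠ 0) fun j _ hj h => hj (by rw [hfg j h, abs_zero])]
  calc ∑ j with g j ≠ 0, |f j| ≤ #{j | g j ≠ 0} • ζ := sum_le_card_nsmul _ _ _ fun j _ => hf j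
    _ ≤ s * ζ := by rw [nsmul_eq_mul]; gcongr

/-- stability of sparse, row- and column-diagonally dominant linear systems.
There is a constant `c` depending only on `C₀` such that for every row/column diagonally
dominant matrix `A` with at most `s` nonzero entries per row and column, every perturbation
`B` with the same sparsity pattern and entries bounded by `ζ ≤ 1/(10 s)`, and every
right-hand sides `b, y` with `‖b‖_∞ ≤ C₀` and `‖y‖_∞ ≤ ζ`, both `A` and `A + B` are
invertible and `‖(A+B)⁻¹(b+y) − A⁻¹ b‖_∞ ≤ c·s·ζ`. Here vectors `Fin m → ℝ` carry the
sup-norm. -/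
theorem sparse_diag_dominant_stability (C₀ : ℝ) (hC₀ : 0 < C₀) :
    ∃ c : ℝ, 0 < c ∧
      ∀ (m s : ℕ) (ζ : ℝ) (A B : Matrix (Fin m) (Fin m) ℝ) (b y : Fin m → ℝ),
        (∀ i, (0.75 : ℝ) ≤ |A i i|) →
        (∀ i, (0.5 : ℝ) + ∑ j ∈ Finset.univ.erase i, |A i j| ≤ |A i i|) →
        (∀ i, (0.5 : ℝ) + ∑ j ∈ Finset.univ.erase i, |A j i| ≤ |A i i|) →
        (∀ i, (Finset.univ.filter fun j => A i j ≠ 0).card ≤ s) →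
        (∀ j, (Finset.univ.filter fun i => A i j ≠ 0).card ≤ s) →
        (∀ i j, A i j = 0 → B i j = 0) →
        (∀ i j, |B i j| ≤ ζ) →
        0 < ζ → ζ ≤ 1 / (10 * s) →
        ‖y‖ ≤ ζ → ‖b‖ ≤ C₀ →
        IsUnit A ∧ IsUnit (A + B) ∧
          ‖(A + B)⁻¹.mulVec (b + y) - A⁻¹.mulVec b‖ ≤ c * s * ζ := by
  refine ⟨5 * C₀ + 3, by linarith, ?_⟩
  intro m s ζ A B b y _ hrow _ hsparse _ hpat hBζ hζ hζs hy hb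
  have hs : (1 : ℝ) ≤ s := by
    rcases Nat.eq_zero_or_pos s with rfl | hs
    · norm_num at hζs; linarith
    · exact_mod_cast hs
  have hsζ : s * ζ ≤ 1 / 10 := by
    rw [le_div_iff₀ (by positivity)] at hζs; linarith
  have hBrow : ∀ i, ∑ j, |B i j| ≤ s * ζ :=
    fun i => sum_abs_le_of_pattern (hpat i) (hsparse i) (hBζ i) hζ.le
  have hA : A.IsRowDiagDominant (1 / 2) := fun i => by convert hrow i using 2; norm_num
  have hAB : (A + B).IsRowDiagDominant (2 / 5) := (hA.add hBrow).mono (by linarith)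
  refine ⟨hA.isUnit (by norm_num), hAB.isUnit (by norm_num), ?_⟩
  have hdiff := hA.mul_mul_norm_inv_mulVec_sub_le (by norm_num) hAB (by norm_num) hBrow
    (by positivity) b y
  have hby : ‖b + y‖ ≤ C₀ + ζ := (norm_add_le b y).trans (by linarith)
  nlinarith [mul_le_mul_of_nonneg_left hby (by positivity : (0 : ℝ) ≤ s * ζ)]
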